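/- arXiv:2503.23217 — 5 statements merged into one kernel-verified Lean document; each statement's English description precedes it below -/
import Mathlib

section
/- Given sequences c_1,...,c_k and d_1,...,d_k of nonnegative reals with all d_i > 0 and sum_{i=1}^k d_i * c_i >= 1, there exists a nonempty subset I of {1,...,k} such that min_{i in I} c_i >= 1 / (alpha * sum_{i in I} d_i), where alpha = 1 + log( (sum_{i=1}^k d_i) / (min_{i=1}^k d_i) ). -/
/-!
Test the superlevel sets `I_i = {j | c i ≤ c j}`, on which `c` attains its minimum at `i`. If all
of them failed, `1 ≤ ∑ d_i c_i < α⁻¹ ∑ d_i / D_i` with `D_i = ∑_{j ∈ I_i} d_j`. Peeling off the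
indices in order of increasing `c`, the index `a` removed when total weight `D` remains has
`D_a = D`, and `d_a / D ≤ log D - log (D - d_a)`; the last one contributes `1`. The sum therefore
telescopes to at most `1 + log (∑ d / min d) = α`.
-/

open Finset Real

theorem sub_div_le_log_sub_log {x y : ℝ} (hx : 0 < x) (hy : 0 < y) :
    (y - x) / y ≤ log y - log x := by
  have h := one_sub_inv_le_log_of_pos (div_pos hy hx)
  rwa [inv_div, one_sub_div hy.ne', log_div hy.ne' hx.ne'] at h

theorem div_sum_le_div_sum_of_subset {ι : Type*} {d : ι → ℝ} {s t : Finset ι} {i : ι}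
    (hts : t ⊆ s) (hi : i ∈ t) (hd : ∀ j ∈ s, 0 < d j) :
    d i / ∑ j ∈ s, d j ≤ d i / ∑ j ∈ t, d j :=
  div_le_div_of_nonneg_left (hd i (hts hi)).le (sum_pos (fun j hj => hd j (hts hj)) ⟨i, hi⟩)
    (sum_le_sum_of_subset_of_nonneg hts fun j hj _ => (hd j hj).le)

theorem sum_div_sum_superlevel_le {ι : Type*} (c d : ι → ℝ) {m : ℝ} (hm : 0 < m)
    {s : Finset ι} (hs : s.Nonempty) (hmd : ∀ i ∈ s, m ≤ d i) :
    ∑ i ∈ s, d i / ∑ j ∈ s with c i ≤ c j, d j ≤ 1 + log (∑ i ∈ s, d i) - log m := by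
  induction hs using Finset.Nonempty.strong_induction with
  | h₀ a =>
    have ha := hmd a (mem_singleton_self a)
    rw [sum_singleton, filter_singleton, if_pos le_rfl, sum_singleton,
      div_self (hm.trans_le ha).ne']
    linarith [log_le_log hm ha]
  | @h₁ s hs ih =>
    classical
    obtain ⟨a, has, hmin⟩ := s.exists_min_image c hs.nonempty
    set t := s.erase a
    have hd : ∀ i ∈ s, 0 < d i := fun i hi => hm.trans_le (hmd i hi)
    have hlog : d a / ∑ i ∈ s, d i ≤ log (∑ i ∈ s, d i) - log (∑ i ∈ t, d i) := by
      rw [show d a = ∑ i ∈ s, d i - ∑ i ∈ t, d i by rw [← add_sum_erase s d has]; ring]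
      exact sub_div_le_log_sub_log (sum_pos (fun i hi => hd i (mem_of_mem_erase hi))
        hs.erase_nonempty) (sum_pos hd hs.nonempty)
    calc ∑ i ∈ s, d i / ∑ j ∈ s with c i ≤ c j, d j
        = d a / ∑ i ∈ s, d i + ∑ i ∈ t, d i / ∑ j ∈ s with c i ≤ c j, d j := by
          rw [← add_sum_erase s _ has, filter_true_of_mem hmin]
      _ ≤ d a / ∑ i ∈ s, d i + ∑ i ∈ t, d i / ∑ j ∈ t with c i ≤ c j, d j := by
          grw [sum_le_sum fun i hi => div_sum_le_div_sum_of_subset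
            (filter_subset_filter _ (erase_subset a s)) (mem_filter.2 ⟨hi, le_refl (c i)⟩)
            fun j hj => hd j (mem_filter.1 hj).1]
      _ ≤ (log (∑ i ∈ s, d i) - log (∑ i ∈ t, d i)) + (1 + log (∑ i ∈ t, d i) - log m) :=
          add_le_add hlog (ih t hs.erase_nonempty (erase_ssubset has)
            fun i hi => hmd i (mem_of_mem_erase hi))
      _ = 1 + log (∑ i ∈ s, d i) - log m := by ring

theorem stmt0_general (k : ℕ) (c d : Fin (k + 1) → ℝ)
    (hd : ∀ i, 0 < d i)
    (hsum : 1 ≤ ∑ i, d i * c i) :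
    ∃ (I : Finset (Fin (k + 1))) (hI : I.Nonempty),
      1 / ((1 + Real.log ((∑ i, d i) / Finset.univ.inf' Finset.univ_nonempty d)) *
            ∑ i ∈ I, d i) ≤ I.inf' hI c := by
  by_contra! hcon
  set m := univ.inf' univ_nonempty d
  set α := 1 + log ((∑ i, d i) / m) with hα_def
  have hm : 0 < m := (lt_inf'_iff _).2 fun i _ => hd i
  have hmd : ∀ i ∈ univ, m ≤ d i := fun i hi => inf'_le d hi
  have hα : α = 1 + log (∑ i, d i) - log m := by
    rw [hα_def, log_div (sum_pos (fun i _ => hd i) univ_nonempty).ne' hm.ne', add_sub_assoc]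
  have hα_pos : 0 < α := by
    have := log_nonneg ((one_le_div hm).2 ((hmd 0 (mem_univ 0)).trans
      (single_le_sum (fun i _ => (hd i).le) (mem_univ 0))))
    positivity
  have hlevel : ∀ i, c i < 1 / (α * ∑ j with c i ≤ c j, d j) := fun i =>
    (le_inf' _ _ fun j hj => (mem_filter.1 hj).2).trans_lt (hcon _ ⟨i, by simp⟩)
  refine lt_irrefl (1 : ℝ) ?_
  calc
    1 ≤ ∑ i, d i * c i := hsum
    _ < ∑ i, d i * (1 / (α * ∑ j with c i ≤ c j, d j)) :=
        sum_lt_sum_of_nonempty univ_nonempty fun i _ => mul_lt_mul_of_pos_left (hlevel i) (hd i)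
    _ = (∑ i, d i / ∑ j with c i ≤ c j, d j) / α := by
        rw [sum_div]; congr 1 with i; field_simp
    _ ≤ α / α := by
        gcongr
        exact hα ▸ sum_div_sum_superlevel_le c d hm univ_nonempty hmd
    _ = 1 := div_self hα_pos.ne'

/-- Bucketing lemma: given nonnegative `c i`, positive `d i` with `∑ d i * c i ≥ 1`,
there is a nonempty subset `I` with `min_{i ∈ I} c i ≥ 1 / (α * ∑_{i ∈ I} d i)`,
where `α = 1 + log((∑ d) / (min d))`. -/
theorem stmt0 (k : ℕ) (c d : Fin (k + 1) → ℝ)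
    (hc : ∀ i, 0 ≤ c i) (hd : ∀ i, 0 < d i)
    (hsum : 1 ≤ ∑ i, d i * c i) :
    ∃ (I : Finset (Fin (k + 1))) (hI : I.Nonempty),
      1 / ((1 + Real.log ((∑ i, d i) / Finset.univ.inf' Finset.univ_nonempty d)) *
            ∑ i ∈ I, d i) ≤ I.inf' hI c :=
  stmt0_general k c d hd hsum
end

section
/- Suppose c_1 >= c_2 >= ... >= c_k >= 0 and d_1,...,d_k > 0 are reals, and for every i in {1,...,k} we have c_i < (1/alpha) * (1 / (d_1 + ... + d_i)), where alpha = 1 + log((d_1+...+d_k)/d_1). Then sum_{i=1}^k d_i * c_i < 1. -/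
/-!
With prefix sums `D i`, the term `d 0 / D 0` is `1` and each later term
`d i / D i = 1 - D (i-1) / D i` is at most `log (D i / D (i-1))` (from
`1 - x⁻¹ ≤ log x`), so the sum telescopes to
`∑ d i / D i ≤ 1 + log (D k / d 0) = α`. Since `c i < 1 / (α D i)`,
`∑ d i c i < α⁻¹ ∑ d i / D i ≤ 1`.
-/

open Finset Real

lemma sub_div_le_log_div {a b : ℝ} (ha : 0 < a) (hb : 0 < b) : (b - a) / b ≤ log (b / a) := by
  have h := one_sub_inv_le_log_of_pos (div_pos hb ha)
  rwa [inv_div, one_sub_div hb.ne'] at h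

lemma sum_range_div_partialSum_le (f : ℕ → ℝ) (hf : ∀ i, 0 < f i) (n : ℕ) :
    ∑ i ∈ range (n + 1), f i / ∑ j ∈ range (i + 1), f j ≤
      1 + log ((∑ j ∈ range (n + 1), f j) / f 0) := by
  have hS : ∀ m, 0 < ∑ j ∈ range (m + 1), f j := fun m =>
    sum_pos (fun j _ => hf j) nonempty_range_add_one
  induction n with
  | zero => simp [div_self (hf 0).ne']
  | succ n ih =>
    set S := ∑ j ∈ range (n + 1), f j
    set S' := ∑ j ∈ range (n + 1 + 1), f j
    have hS' : S' = S + f (n + 1) := sum_range_succ f (n + 1)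
    have hstep : f (n + 1) / S' ≤ log (S' / f 0) - log (S / f 0) := by
      rw [← log_div (div_pos (hS _) (hf 0)).ne' (div_pos (hS _) (hf 0)).ne',
        div_div_div_cancel_right₀ (hf 0).ne']
      calc f (n + 1) / S' = (S' - S) / S' := by rw [hS', add_sub_cancel_left]
        _ ≤ log (S' / S) := sub_div_le_log_div (hS n) (hS (n + 1))
    rw [sum_range_succ]
    linarith

lemma sum_div_sum_Iic_le_one_add_log {k : ℕ} (d : Fin (k + 1) → ℝ) (hd : ∀ i, 0 < d i) :
    ∑ i, d i / ∑ j ∈ Iic i, d j ≤ 1 + log ((∑ j ∈ Iic (Fin.last k), d j) / d 0) := by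
  set f : ℕ → ℝ := fun m => d (Fin.ofNat (k + 1) m)
  have hprefix : ∀ i : Fin (k + 1), ∑ j ∈ Iic i, d j = ∑ j ∈ range (i + 1), f j := by
    intro i
    rw [Nat.range_succ_eq_Iic, ← Fin.map_valEmbedding_Iic, sum_map]
    simp [f]
  simp_rw [hprefix, Fin.val_last]
  convert sum_range_div_partialSum_le f (fun i => hd _) k using 1
  · rw [← Fin.sum_univ_eq_sum_range (fun i => f i / ∑ j ∈ range (i + 1), f j)]
    simp [f]
  · simp [f]

theorem stmt3_general (k : ℕ) (c d : Fin (k + 1) → ℝ)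
    (hd : ∀ i, 0 < d i)
    (hlt : ∀ i, c i <
      (1 / (1 + Real.log ((∑ j ∈ Finset.Iic (Fin.last k), d j) / d 0))) *
        (1 / ∑ j ∈ Finset.Iic i, d j)) :
    ∑ i, d i * c i < 1 := by
  set α := 1 + log ((∑ j ∈ Iic (Fin.last k), d j) / d 0)
  set T := ∑ i, d i / ∑ j ∈ Iic i, d j
  have hTα : T ≤ α := sum_div_sum_Iic_le_one_add_log d hd
  have hT : 0 < T := sum_pos (fun i _ => div_pos (hd i) (sum_pos (fun j _ => hd j) nonempty_Iic))
    univ_nonempty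
  have hα : 0 < α := hT.trans_le hTα
  calc ∑ i, d i * c i < ∑ i, d i * (1 / α * (1 / ∑ j ∈ Iic i, d j)) :=
        sum_lt_sum_of_nonempty univ_nonempty fun i _ => mul_lt_mul_of_pos_left (hlt i) (hd i)
    _ = T / α := by simp only [T, sum_div]; exact sum_congr rfl fun i _ => by ring
    _ ≤ 1 := (div_le_one hα).mpr hTα

/-- If `c` is nonincreasing and nonnegative, `d` positive, and
`c i < (1/α) * (1 / D i)` for every `i` where `D i = d 1 + ⋯ + d i` are the prefix
sums and `α = 1 + log(D k / d 1)`, then `∑ d i * c i < 1`. -/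
theorem stmt3 (k : ℕ) (c d : Fin (k + 1) → ℝ)
    (hmono : ∀ i j : Fin (k + 1), i ≤ j → c j ≤ c i)
    (hc : ∀ i, 0 ≤ c i) (hd : ∀ i, 0 < d i)
    (hlt : ∀ i, c i <
      (1 / (1 + Real.log ((∑ j ∈ Finset.Iic (Fin.last k), d j) / d 0))) *
        (1 / ∑ j ∈ Finset.Iic i, d j)) :
    ∑ i, d i * c i < 1 :=
  stmt3_general k c d hd hlt
end

section
/- Let d_1,...,d_k > 0 be reals and let D_i = d_1 + ... + d_i denote the prefix sums. Then sum_{i=1}^k d_i / D_i <= 1 + log(D_k / d_1). -/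
/-!
Since `d i = D i - D (i - 1)`, the elementary bound `1 - x⁻¹ ≤ log x` at `x = D i / D (i - 1)` gives
`d i / D i ≤ log D i - log D (i - 1)` for `i ≥ 1`. Summing telescopes to `log (D k / D 0)`, and the
term `i = 0` contributes `d 0 / D 0 = 1`.
-/

open Finset

lemma Real.sub_div_le_log_sub_log {a b : ℝ} (ha : 0 < a) (hb : 0 < b) :
    (b - a) / b ≤ Real.log b - Real.log a := by
  calc (b - a) / b = 1 - (b / a)⁻¹ := by field_simp
    _ ≤ Real.log (b / a) := Real.one_sub_inv_le_log_of_pos (div_pos hb ha)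
    _ = Real.log b - Real.log a := Real.log_div hb.ne' ha.ne'

lemma Fin.sum_univ_succ_sub_castSucc {M : Type*} [AddCommGroup M] {n : ℕ} (f : Fin (n + 1) → M) :
    ∑ i : Fin n, (f i.succ - f i.castSucc) = f (Fin.last n) - f 0 := by
  cases n with
  | zero => simp
  | succ m => rw [← Fin.succ_last, ← Fin.sum_Iic_sub, ← Fin.top_eq_last, Finset.Iic_top]

lemma Fin.sum_Iic_succ {M : Type*} [AddCommMonoid M] {n : ℕ} (f : Fin (n + 1) → M) (i : Fin n) :
    ∑ j ∈ Iic i.succ, f j = ∑ j ∈ Iic i.castSucc, f j + f i.succ := by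
  rw [Iic_eq_cons_Iio, Finset.sum_cons, add_comm]
  rfl

lemma sum_sub_div_le_log_div {n : ℕ} (D : Fin (n + 1) → ℝ) (hD : ∀ i, 0 < D i) :
    ∑ i : Fin n, (D i.succ - D i.castSucc) / D i.succ ≤ Real.log (D (Fin.last n) / D 0) := by
  calc ∑ i : Fin n, (D i.succ - D i.castSucc) / D i.succ
      ≤ ∑ i : Fin n, (Real.log (D i.succ) - Real.log (D i.castSucc)) :=
        sum_le_sum fun i _ ↦ Real.sub_div_le_log_sub_log (hD _) (hD _)
    _ = Real.log (D (Fin.last n) / D 0) := by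
        rw [Real.log_div (hD _).ne' (hD _).ne']
        exact Fin.sum_univ_succ_sub_castSucc (Real.log ∘ D)

/-- With prefix sums `D i = d 0 + ⋯ + d i` of positive reals,
`∑ i, d i / D i ≤ 1 + log (D_last / d 0)`. -/
theorem stmt4 (k : ℕ) (d : Fin (k + 1) → ℝ) (hd : ∀ i, 0 < d i) :
    ∑ i, d i / (∑ j ∈ Finset.Iic i, d j) ≤
      1 + Real.log ((∑ j ∈ Finset.Iic (Fin.last k), d j) / d 0) := by
  set D : Fin (k + 1) → ℝ := fun i ↦ ∑ j ∈ Iic i, d j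
  have hD : ∀ i, 0 < D i := fun i ↦ sum_pos (fun j _ ↦ hd j) nonempty_Iic
  have hD0 : D 0 = d 0 := by
    simp only [D, ← bot_eq_zero, Iic_bot, sum_singleton]
  have hd_succ : ∀ i : Fin k, d i.succ = D i.succ - D i.castSucc := fun i ↦ by
    simp only [D, Fin.sum_Iic_succ, add_sub_cancel_left]
  rw [Fin.sum_univ_succ, ← hD0, div_self (hD 0).ne']
  simp_rw [hd_succ]
  gcongr
  exact sum_sub_div_le_log_div D hD
end

section
/- With the same setup as the exponential distance weight (finite set V of size n, symmetric rdist satisfying the triangle inequality, h > 0, 1 <= alpha, and w defined by truncating 2^{-alpha * rdist(u,v)/h} to 0 when rdist(u,v) > (2h log_2 n)/alpha), for all u,v,w in V: w(u,v') <= 2^{alpha * rdist(v',v)/h} * (w(u,v) + 1/n^2), where v' denotes the third vertex. -/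
/-! With `rdist u u = 0` the truncated weight is dominated by the kernel
`K(u,v') = 2^{-α·rdist(u,v')/h}`. The triangle inequality gives
`K(u,v') ≤ 2^{α·rdist(v',v)/h} · K(u,v)`, and `K(u,v) ≤ w(u,v) + 1/n²` because truncation
only discards kernel values below `2^{-α R/h} = 1/n²`, where `R = 2h·log₂ n / α`. -/

open scoped ENNReal

/-- The (untruncated) exponential kernel `2^{-α·rdist(u,v)/h}`, taken to be `0` when
`rdist(u,v) = ∞`. -/
noncomputable def expKer {V : Type*} (rdist : V → V → ℝ≥0∞) (α h : ℝ) (u v : V) : ℝ≥0∞ :=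
  if rdist u v = ⊤ then 0
  else ENNReal.ofReal ((2 : ℝ) ^ (-(α * (rdist u v).toReal / h)))

open Classical in
/-- The `h`-length `α`-exponential distance weight: `1` on the diagonal, the exponential
kernel within round-trip radius `2h·log₂ n / α`, and `0` beyond. -/
noncomputable def expW {V : Type*} (rdist : V → V → ℝ≥0∞) (α h : ℝ) (n : ℕ)
    (u v : V) : ℝ≥0∞ :=
  if u = v then 1
  else if rdist u v ≤ ENNReal.ofReal (2 * h * (Real.log n / Real.log 2) / α) then
    expKer rdist α h u v
  else 0

/-- The growth factor `2^{α·rdist(v',v)/h}`, taken to be `∞` when `rdist(v',v) = ∞`. -/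
noncomputable def expFac {V : Type*} (rdist : V → V → ℝ≥0∞) (α h : ℝ)
    (v' v : V) : ℝ≥0∞ :=
  if rdist v' v = ⊤ then ⊤
  else ENNReal.ofReal ((2 : ℝ) ^ (α * (rdist v' v).toReal / h))

lemma two_rpow_neg_truncation_radius {n : ℕ} (hn : 0 < n) {α h : ℝ} (hα : α ≠ 0)
    (hh : h ≠ 0) :
    (2 : ℝ) ^ (-(α * (2 * h * (Real.log n / Real.log 2) / α) / h)) = 1 / (n : ℝ) ^ 2 := by
  have hexp : -(α * (2 * h * (Real.log n / Real.log 2) / α) / h) = Real.logb 2 n * (-2) := by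
    rw [Real.logb]
    field_simp
  have hn' : (0 : ℝ) < n := by exact_mod_cast hn
  rw [hexp, Real.rpow_mul zero_le_two, Real.rpow_logb zero_lt_two one_lt_two.ne' hn',
    Real.rpow_neg hn'.le, one_div]
  norm_cast

section

variable {V : Type*} {rdist : V → V → ℝ≥0∞} {α h : ℝ}

lemma expKer_le_one (hα : 0 ≤ α) (hh : 0 ≤ h) (u v : V) : expKer rdist α h u v ≤ 1 := by
  unfold expKer
  split_ifs
  · exact zero_le_one
  · refine ENNReal.ofReal_le_one.2 (Real.rpow_le_one_of_one_le_of_nonpos one_le_two ?_)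
    have : 0 ≤ α * (rdist u v).toReal / h := by positivity
    linarith

lemma expW_le_expKer {n : ℕ} (hdiag : ∀ u, rdist u u = 0) (u v : V) :
    expW rdist α h n u v ≤ expKer rdist α h u v := by
  unfold expW
  split_ifs with huv
  · subst huv
    simp [expKer, hdiag]
  · exact le_rfl
  · exact zero_le

lemma expKer_le_expW_add {n : ℕ} (hα : 0 < α) (hh : 0 < h) (hn : 0 < n) (u v : V) :
    expKer rdist α h u v ≤ expW rdist α h n u v + ENNReal.ofReal (1 / (n : ℝ) ^ 2) := by
  unfold expW
  split_ifs with huv hnear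
  · exact (expKer_le_one hα.le hh.le u v).trans le_self_add
  · exact le_self_add
  · rw [zero_add, expKer]
    split_ifs with htop
    · exact zero_le
    rw [← two_rpow_neg_truncation_radius hn hα.ne' hh.ne']
    have hfar := (ENNReal.ofReal_le_iff_le_toReal htop).1 (not_le.1 hnear).le
    gcongr
    exact one_le_two

lemma expKer_le_expFac_mul (htri : ∀ a b c, rdist a c ≤ rdist a b + rdist b c)
    (hα : 0 ≤ α) (hh : 0 ≤ h) {u v v' : V} (hv'v : rdist v' v ≠ ⊤) :
    expKer rdist α h u v' ≤ expFac rdist α h v' v * expKer rdist α h u v := by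
  by_cases huv' : rdist u v' = ⊤
  · simp [expKer, huv']
  have hsum_ne_top : rdist u v' + rdist v' v ≠ ⊤ := ENNReal.add_ne_top.2 ⟨huv', hv'v⟩
  have huv : rdist u v ≠ ⊤ := ne_top_of_le_ne_top hsum_ne_top (htri u v' v)
  have hdist : (rdist u v).toReal ≤ (rdist u v').toReal + (rdist v' v).toReal := by
    rw [← ENNReal.toReal_add huv' hv'v]
    exact ENNReal.toReal_mono hsum_ne_top (htri u v' v)
  rw [expKer, expKer, expFac, if_neg huv', if_neg huv, if_neg hv'v,
    ← ENNReal.ofReal_mul (by positivity), ← Real.rpow_add zero_lt_two]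
  gcongr
  · exact one_le_two
  · have : α * (rdist u v).toReal / h ≤
        α * ((rdist u v').toReal + (rdist v' v).toReal) / h := by
      gcongr
    rw [mul_add, add_div] at this
    linarith

end

theorem stmt7_general {V : Type*} (n : ℕ) (hn2 : 2 ≤ n)
    (rdist : V → V → ℝ≥0∞)
    (hdiag : ∀ u, rdist u u = 0)
    (htri : ∀ a b c, rdist a c ≤ rdist a b + rdist b c)
    (h α : ℝ) (hh : 0 < h) (hα : 1 ≤ α) :
    ∀ u v v', expW rdist α h n u v' ≤
      expFac rdist α h v' v *
        (expW rdist α h n u v + ENNReal.ofReal (1 / (n : ℝ) ^ 2)) := by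
  intro u v v'
  have hα0 : 0 < α := one_pos.trans_le hα
  by_cases hv'v : rdist v' v = ⊤
  · have hsum : expW rdist α h n u v + ENNReal.ofReal (1 / (n : ℝ) ^ 2) ≠ 0 := by
      refine (lt_of_lt_of_le ?_ le_add_self).ne'
      rw [ENNReal.ofReal_pos]
      positivity
    rw [expFac, if_pos hv'v, ENNReal.top_mul hsum]
    exact le_top
  calc expW rdist α h n u v'
      ≤ expKer rdist α h u v' := expW_le_expKer hdiag u v'
    _ ≤ expFac rdist α h v' v * expKer rdist α h u v :=
      expKer_le_expFac_mul htri hα0.le hh.le hv'v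
    _ ≤ _ := by
      gcongr
      exact expKer_le_expW_add hα0 hh (by omega) u v

/-- Upper half of property 4 of the exponential distance weight:
`w(u,v') ≤ 2^{α·rdist(v',v)/h} · (w(u,v) + 1/n²)`. -/
theorem stmt7 {V : Type*} [Fintype V] (n : ℕ) (hn : n = Fintype.card V) (hn2 : 2 ≤ n)
    (rdist : V → V → ℝ≥0∞)
    (hsym : ∀ u v, rdist u v = rdist v u)
    (hdiag : ∀ u, rdist u u = 0)
    (htri : ∀ a b c, rdist a c ≤ rdist a b + rdist b c)
    (h α : ℝ) (hh : 0 < h) (hα : 1 ≤ α) :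
    ∀ u v v', expW rdist α h n u v' ≤
      expFac rdist α h v' v *
        (expW rdist α h n u v + ENNReal.ofReal (1 / (n : ℝ) ^ 2)) :=
  stmt7_general n hn2 rdist hdiag htri h α hh hα
end

section
/- Let G be a graph, C a 2h-length moving cut of size |C| = sum_e u(e)*C(e), and D a demand with every demand pair (u,v) satisfying dist_{G}(u,v) <= h but dist_{G-C}(u,v) > 2h, where G-C increases the length of edge e by 2h*C(e). Then any routing of D along paths of length at most h in G has congestion at least |D| * h / (2h * |C|) = (1/2) * |D|/|C|. -/
/-!
Every flow path is short (`ℓ`-length at most `h`) but becomes longer than `2h` once the cut is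
added, so the cut alone puts length more than `h` on it. Weighting each path by its flow and
exchanging the order of summation, `h · |D|` is at most `∑ₑ 2h·C(e) · load(e)`, and the
congestion bound `load(e) ≤ γ · u(e)` turns this into `h · |D| ≤ γ · 2h · |C|`.
-/

open Finset

namespace MovingCut

theorem lt_sum_of_sum_le_of_lt_sum_add {E : Type*} {s : Finset E} {ℓ c : E → ℝ} {h : ℝ}
    (hlen : ∑ e ∈ s, ℓ e ≤ h) (hsep : 2 * h < ∑ e ∈ s, (ℓ e + c e)) :
    h < ∑ e ∈ s, c e := by
  rw [sum_add_distrib] at hsep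
  linarith

variable {E ι : Type*} [Fintype E] [Fintype ι] [DecidableEq E]

def edgeLoad (P : ι → Finset E) (f : ι → ℝ) (e : E) : ℝ :=
  ∑ i ∈ univ.filter (fun i => e ∈ P i), f i

theorem sum_mul_sum_eq_sum_mul_edgeLoad (P : ι → Finset E) (f : ι → ℝ) (w : E → ℝ) :
    ∑ i, f i * ∑ e ∈ P i, w e = ∑ e, w e * edgeLoad P f e := by
  simp only [edgeLoad, mul_sum]
  rw [sum_comm' (t' := univ) (s' := fun e => univ.filter (fun i => e ∈ P i))
    (fun i e => by simp)]
  exact sum_congr rfl fun e _ => sum_congr rfl fun i _ => mul_comm _ _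

theorem sum_mul_le_of_le_sum_weight (P : ι → Finset E) (f : ι → ℝ) (u w : E → ℝ)
    (h γ : ℝ) (hf : ∀ i, 0 ≤ f i) (hw : ∀ e, 0 ≤ w e)
    (hpath : ∀ i, h ≤ ∑ e ∈ P i, w e)
    (hcong : ∀ e, edgeLoad P f e ≤ γ * u e) :
    (∑ i, f i) * h ≤ γ * ∑ e, w e * u e := by
  calc (∑ i, f i) * h ≤ ∑ i, f i * ∑ e ∈ P i, w e := by
        rw [sum_mul]
        exact sum_le_sum fun i _ => mul_le_mul_of_nonneg_left (hpath i) (hf i)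
    _ = ∑ e, w e * edgeLoad P f e := sum_mul_sum_eq_sum_mul_edgeLoad P f w
    _ ≤ ∑ e, w e * (γ * u e) :=
        sum_le_sum fun e _ => mul_le_mul_of_nonneg_left (hcong e) (hw e)
    _ = γ * ∑ e, w e * u e := by
        rw [mul_sum]
        exact sum_congr rfl fun e _ => by ring

end MovingCut

theorem stmt10_general {E ι : Type*} [Fintype E] [Fintype ι] [DecidableEq E]
    (u ℓ C : E → ℝ)
    (hC0 : ∀ e, 0 ≤ C e)
    (h : ℝ) (hh : 0 < h)
    (P : ι → Finset E) (f : ι → ℝ) (hf : ∀ i, 0 ≤ f i)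
    (hlen : ∀ i, ∑ e ∈ P i, ℓ e ≤ h)
    (hsep : ∀ i, 2 * h < ∑ e ∈ P i, (ℓ e + 2 * h * C e))
    (γ : ℝ) (hγ0 : 0 ≤ γ)
    (hcong : ∀ e, ∑ i ∈ Finset.univ.filter (fun i => e ∈ P i), f i ≤ γ * u e) :
    (∑ i, f i) * h / (2 * h * ∑ e, u e * C e) ≤ γ := by
  have hbound : (∑ i, f i) * h ≤ γ * ∑ e, 2 * h * C e * u e :=
    MovingCut.sum_mul_le_of_le_sum_weight P f u (fun e => 2 * h * C e) h γ hf
      (fun e => mul_nonneg (by positivity) (hC0 e))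
      (fun i => (MovingCut.lt_sum_of_sum_le_of_lt_sum_add (hlen i) (hsep i)).le) hcong
  have hcut : ∑ e, 2 * h * C e * u e = 2 * h * ∑ e, u e * C e := by
    rw [mul_sum]
    exact sum_congr rfl fun e _ => by ring
  rcases le_or_gt (2 * h * ∑ e, u e * C e) 0 with hS | hS
  · have hflow : 0 ≤ (∑ i, f i) * h := mul_nonneg (sum_nonneg fun i _ => hf i) hh.le
    exact (div_nonpos_of_nonneg_of_nonpos hflow hS).trans hγ0
  · rwa [div_le_iff₀ hS, ← hcut]

/-- Moving-cut congestion lower bound: if a moving cut `C` (with values in `[0,1]`,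
length increase `2h·C(e)`) fully `2h`-separates the routed demand — every flow path
has `ℓ`-length at most `h` in `G` but length more than `2h` in `G - C` — then any
congestion bound `γ` for the routing satisfies `γ ≥ |D|·h / (2h·|C|)`. -/
theorem stmt10 {E ι : Type*} [Fintype E] [Fintype ι] [DecidableEq E]
    (u ℓ C : E → ℝ) (hu : ∀ e, 0 < u e) (hℓ : ∀ e, 0 < ℓ e)
    (hC0 : ∀ e, 0 ≤ C e) (hC1 : ∀ e, C e ≤ 1)
    (h : ℝ) (hh : 0 < h)
    (P : ι → Finset E) (f : ι → ℝ) (hf : ∀ i, 0 ≤ f i)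
    (hlen : ∀ i, ∑ e ∈ P i, ℓ e ≤ h)
    (hsep : ∀ i, 2 * h < ∑ e ∈ P i, (ℓ e + 2 * h * C e))
    (γ : ℝ) (hγ0 : 0 ≤ γ)
    (hcong : ∀ e, ∑ i ∈ Finset.univ.filter (fun i => e ∈ P i), f i ≤ γ * u e) :
    (∑ i, f i) * h / (2 * h * ∑ e, u e * C e) ≤ γ :=
  stmt10_general u ℓ C hC0 h hh P f hf hlen hsep γ hγ0 hcong
end
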